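/- arXiv:1609.03326 — 2 statements merged into one kernel-verified Lean document; each statement's English description precedes it below -/
import Mathlib

section
/- Let (X, μ) be a measure space, γ > 0, and let u₁, u₂, λ₁, λ₂, v, μ̂ ∈ L²(μ) be real-valued. Define b₁[(u,λ);(v,μ̂)] := γ^{-1}⟨[u - γλ]_+, v⟩ + ⟨[u - γλ]_+, μ̂⟩ + γ⟨λ, μ̂⟩. Then |b₁[(u₁,λ₁);(v,μ̂)] - b₁[(u₂,λ₂);(v,μ̂)]| ≤ 2·(γ^{-1/2}‖u₁ - u₂‖ + γ^{1/2}‖λ₁ - λ₂‖)·(γ^{-1/2}‖v‖ + γ^{1/2}‖μ̂‖). -/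
/-!
Write `P_i = [u_i - γλ_i]_+`. The difference of the two forms is
`γ⁻¹⟨P₁ - P₂, v⟩ + ⟨P₁ - P₂, μ̂⟩ + γ⟨λ₁ - λ₂, μ̂⟩`; since the positive part is 1-Lipschitz,
`‖P₁ - P₂‖ ≤ ‖u₁ - u₂‖ + γ‖λ₁ - λ₂‖`, and Cauchy–Schwarz reduces the estimate to an inequality
between nonnegative reals, which becomes transparent after writing `γ = s²`.
-/

open MeasureTheory
open scoped RealInnerProductSpace

theorem MeasureTheory.Lp.norm_posPart_sub_posPart_le {X : Type*} [MeasurableSpace X]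
    {μ : Measure X} {p : ENNReal} [Fact (1 ≤ p)] (f g : Lp ℝ p μ) :
    ‖Lp.posPart f - Lp.posPart g‖ ≤ ‖f - g‖ := by
  simpa [Lp.posPart] using
    LipschitzWith.norm_compLp_sub_le Lp.lipschitzWith_pos_part (max_eq_right le_rfl) f g

theorem abs_inv_mul_inner_add_inner_add_mul_inner_le {E : Type*} [NormedAddCommGroup E]
    [InnerProductSpace ℝ E] {γ : ℝ} (hγ : 0 ≤ γ) (x y v m : E) :
    |γ⁻¹ * ⟪x, v⟫ + ⟪x, m⟫ + γ * ⟪y, m⟫| ≤ γ⁻¹ * (‖x‖ * ‖v‖) + ‖x‖ * ‖m‖ + γ * (‖y‖ * ‖m‖) :=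
  calc |γ⁻¹ * ⟪x, v⟫ + ⟪x, m⟫ + γ * ⟪y, m⟫|
      ≤ |γ⁻¹ * ⟪x, v⟫| + |⟪x, m⟫| + |γ * ⟪y, m⟫| := abs_add_three _ _ _
    _ ≤ γ⁻¹ * (‖x‖ * ‖v‖) + ‖x‖ * ‖m‖ + γ * (‖y‖ * ‖m‖) := by
      rw [abs_mul, abs_mul, abs_of_nonneg hγ, abs_of_nonneg (inv_nonneg.mpr hγ)]
      gcongr <;> exact abs_real_inner_le_norm _ _

theorem inv_mul_add_add_mul_le_two_mul_sqrt_weighted {γ p a b c d : ℝ} (hγ : 0 < γ)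
    (ha : 0 ≤ a) (hb : 0 ≤ b) (hc : 0 ≤ c) (hd : 0 ≤ d) (hp : p ≤ a + γ * b) :
    γ⁻¹ * (p * c) + p * d + γ * (b * d) ≤
      2 * ((√γ)⁻¹ * a + √γ * b) * ((√γ)⁻¹ * c + √γ * d) := by
  obtain ⟨s, hs, rfl⟩ : ∃ s, 0 < s ∧ γ = s ^ 2 :=
    ⟨√γ, Real.sqrt_pos.mpr hγ, (Real.sq_sqrt hγ.le).symm⟩
  rw [Real.sqrt_sq hs.le]
  have hpc : p * c ≤ (a + s ^ 2 * b) * c := mul_le_mul_of_nonneg_right hp hc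
  have hpd : p * d ≤ (a + s ^ 2 * b) * d := mul_le_mul_of_nonneg_right hp hd
  calc (s ^ 2)⁻¹ * (p * c) + p * d + s ^ 2 * (b * d)
      ≤ (s ^ 2)⁻¹ * ((a + s ^ 2 * b) * c) + (a + s ^ 2 * b) * d + s ^ 2 * (b * d) := by
        gcongr
    _ = 2 * (s⁻¹ * a + s * b) * (s⁻¹ * c + s * d) - ((s⁻¹ * a) * (s⁻¹ * c) + a * d + b * c) := by
        field_simp
        ring
    _ ≤ 2 * (s⁻¹ * a + s * b) * (s⁻¹ * c + s * d) := by
        have : 0 ≤ (s⁻¹ * a) * (s⁻¹ * c) + a * d + b * c := by positivity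
        linarith

/-- Continuity estimate (Lemma 3.2) for the contact form of Formulation 1,
`b₁[(u,λ);(v,μ̂)] := γ⁻¹⟨[u - γλ]_+, v⟩ + ⟨[u - γλ]_+, μ̂⟩ + γ⟨λ, μ̂⟩`. -/
theorem formulation1_continuity {X : Type*} [MeasurableSpace X] (μ : Measure X)
    (gam : ℝ) (hgam : 0 < gam)
    (u₁ u₂ lam₁ lam₂ v muh : Lp ℝ 2 μ)
    (b₁ : Lp ℝ 2 μ → Lp ℝ 2 μ → Lp ℝ 2 μ → Lp ℝ 2 μ → ℝ)
    (hb₁ : ∀ u lam w m, b₁ u lam w m =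
      gam⁻¹ * ⟪Lp.posPart (u - gam • lam), w⟫ + ⟪Lp.posPart (u - gam • lam), m⟫
        + gam * ⟪lam, m⟫) :
    |b₁ u₁ lam₁ v muh - b₁ u₂ lam₂ v muh| ≤
      2 * ((Real.sqrt gam)⁻¹ * ‖u₁ - u₂‖ + Real.sqrt gam * ‖lam₁ - lam₂‖) *
        ((Real.sqrt gam)⁻¹ * ‖v‖ + Real.sqrt gam * ‖muh‖) := by
  set P := Lp.posPart (u₁ - gam • lam₁) - Lp.posPart (u₂ - gam • lam₂)
  have hdiff : b₁ u₁ lam₁ v muh - b₁ u₂ lam₂ v muh =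
      gam⁻¹ * ⟪P, v⟫ + ⟪P, muh⟫ + gam * ⟪lam₁ - lam₂, muh⟫ := by
    rw [hb₁, hb₁, inner_sub_left, inner_sub_left, inner_sub_left]
    ring
  have hP : ‖P‖ ≤ ‖u₁ - u₂‖ + gam * ‖lam₁ - lam₂‖ :=
    calc ‖P‖ ≤ ‖(u₁ - gam • lam₁) - (u₂ - gam • lam₂)‖ := Lp.norm_posPart_sub_posPart_le _ _
      _ = ‖(u₁ - u₂) - gam • (lam₁ - lam₂)‖ := by congr 1; module
      _ ≤ ‖u₁ - u₂‖ + ‖gam • (lam₁ - lam₂)‖ := norm_sub_le _ _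
      _ = ‖u₁ - u₂‖ + gam * ‖lam₁ - lam₂‖ := by rw [norm_smul, Real.norm_of_nonneg hgam.le]
  rw [hdiff]
  exact (abs_inv_mul_inner_add_inner_add_mul_inner_le hgam.le _ _ _ _).trans
    (inv_mul_add_add_mul_le_two_mul_sqrt_weighted hgam (norm_nonneg _) (norm_nonneg _)
      (norm_nonneg _) (norm_nonneg _) hP)
end

section
/- Let (X, μ) be a measure space, γ > 0, and let u₁, u₂, λ₁, λ₂, v, μ̂ ∈ L²(μ) be real-valued. Define b₂[(u,λ);(v,μ̂)] := -⟨λ, v⟩ + ⟨μ̂, u⟩ + ⟨μ̂, [γλ - u]_+⟩. Then |b₂[(u₁,λ₁);(v,μ̂)] - b₂[(u₂,λ₂);(v,μ̂)]| ≤ 2·(γ^{-1/2}‖u₁ - u₂‖ + γ^{1/2}‖λ₁ - λ₂‖)·(γ^{-1/2}‖v‖ + γ^{1/2}‖μ̂‖). -/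
/-!
Subtracting the two forms leaves `-⟨λ₁ - λ₂, v⟩ + ⟨μ̂, u₁ - u₂⟩ + ⟨μ̂, P₁ - P₂⟩`, where
`Pᵢ = [γλᵢ - uᵢ]_+`. The positive part is 1-Lipschitz pointwise, hence on `L²`, so
`‖P₁ - P₂‖ ≤ γ‖λ₁ - λ₂‖ + ‖u₁ - u₂‖`. Cauchy–Schwarz bounds the difference by
`‖Δλ‖‖v‖ + 2‖Δu‖‖μ̂‖ + γ‖Δλ‖‖μ̂‖`, and expanding the right-hand side with `s = √γ` shows it
exceeds this by `2‖Δu‖‖v‖/γ + ‖Δλ‖‖v‖ + γ‖Δλ‖‖μ̂‖ ≥ 0`.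
-/

open MeasureTheory
open scoped RealInnerProductSpace

namespace MeasureTheory.Lp

variable {α : Type*} [MeasurableSpace α] {μ : Measure α} {p : ENNReal}

theorem norm_posPart_sub_posPart_le_s10 (f g : Lp ℝ p μ) : ‖posPart f - posPart g‖ ≤ ‖f - g‖ :=
  (lipschitzWith_pos_part.norm_compLp_sub_le (max_eq_right le_rfl) f g).trans_eq (one_mul _)

theorem norm_posPart_smul_sub_sub_posPart_smul_sub_le [Fact (1 ≤ p)] {c : ℝ} (hc : 0 ≤ c)
    (f₁ f₂ g₁ g₂ : Lp ℝ p μ) :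
    ‖posPart (c • g₁ - f₁) - posPart (c • g₂ - f₂)‖ ≤ c * ‖g₁ - g₂‖ + ‖f₁ - f₂‖ :=
  calc ‖posPart (c • g₁ - f₁) - posPart (c • g₂ - f₂)‖
      ≤ ‖(c • g₁ - f₁) - (c • g₂ - f₂)‖ := norm_posPart_sub_posPart_le_s10 _ _
    _ = ‖c • (g₁ - g₂) - (f₁ - f₂)‖ := by congr 1; module
    _ ≤ ‖c • (g₁ - g₂)‖ + ‖f₁ - f₂‖ := norm_sub_le _ _
    _ = c * ‖g₁ - g₂‖ + ‖f₁ - f₂‖ := by rw [norm_smul, Real.norm_of_nonneg hc]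

end MeasureTheory.Lp

theorem add_two_mul_add_sq_mul_le_two_mul {s : ℝ} (hs : 0 < s) {a b c d : ℝ}
    (ha : 0 ≤ a) (hb : 0 ≤ b) (hc : 0 ≤ c) (hd : 0 ≤ d) :
    b * c + 2 * (a * d) + s ^ 2 * (b * d) ≤ 2 * (s⁻¹ * a + s * b) * (s⁻¹ * c + s * d) := by
  have expand : 2 * (s⁻¹ * a + s * b) * (s⁻¹ * c + s * d)
      = b * c + 2 * (a * d) + s ^ 2 * (b * d) + (2 * (s⁻¹ * a) * (s⁻¹ * c) + b * c
          + s ^ 2 * (b * d)) := by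
    field_simp
    ring
  rw [expand]
  exact le_add_of_nonneg_right (by positivity)

theorem abs_neg_inner_add_inner_add_inner_le {E : Type*} [NormedAddCommGroup E]
    [InnerProductSpace ℝ E] {s : ℝ} (hs : 0 < s) (x y v m q : E)
    (hq : ‖q‖ ≤ s ^ 2 * ‖y‖ + ‖x‖) :
    |-⟪y, v⟫ + ⟪m, x⟫ + ⟪m, q⟫| ≤ 2 * (s⁻¹ * ‖x‖ + s * ‖y‖) * (s⁻¹ * ‖v‖ + s * ‖m‖) :=
  calc |-⟪y, v⟫ + ⟪m, x⟫ + ⟪m, q⟫| ≤ |⟪y, v⟫| + |⟪m, x⟫| + |⟪m, q⟫| := by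
        have := abs_add_three (-⟪y, v⟫) ⟪m, x⟫ ⟪m, q⟫
        rwa [abs_neg] at this
    _ ≤ ‖y‖ * ‖v‖ + ‖m‖ * ‖x‖ + ‖m‖ * (s ^ 2 * ‖y‖ + ‖x‖) := by
        gcongr
        · exact abs_real_inner_le_norm _ _
        · exact abs_real_inner_le_norm _ _
        · exact (abs_real_inner_le_norm _ _).trans (by gcongr)
    _ = ‖y‖ * ‖v‖ + 2 * (‖x‖ * ‖m‖) + s ^ 2 * (‖y‖ * ‖m‖) := by ring
    _ ≤ 2 * (s⁻¹ * ‖x‖ + s * ‖y‖) * (s⁻¹ * ‖v‖ + s * ‖m‖) :=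
        add_two_mul_add_sq_mul_le_two_mul hs (norm_nonneg _) (norm_nonneg _) (norm_nonneg _)
          (norm_nonneg _)

/-- Continuity estimate (Lemma 3.2) for the contact form of Formulation 2,
`b₂[(u,λ);(v,μ̂)] := -⟨λ, v⟩ + ⟨μ̂, u⟩ + ⟨μ̂, [γλ - u]_+⟩`. -/
theorem formulation2_continuity {X : Type*} [MeasurableSpace X] (μ : Measure X)
    (gam : ℝ) (hgam : 0 < gam)
    (u₁ u₂ lam₁ lam₂ v muh : Lp ℝ 2 μ)
    (b₂ : Lp ℝ 2 μ → Lp ℝ 2 μ → Lp ℝ 2 μ → Lp ℝ 2 μ → ℝ)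
    (hb₂ : ∀ u lam w m, b₂ u lam w m =
      -⟪lam, w⟫ + ⟪m, u⟫ + ⟪m, Lp.posPart (gam • lam - u)⟫) :
    |b₂ u₁ lam₁ v muh - b₂ u₂ lam₂ v muh| ≤
      2 * ((Real.sqrt gam)⁻¹ * ‖u₁ - u₂‖ + Real.sqrt gam * ‖lam₁ - lam₂‖) *
        ((Real.sqrt gam)⁻¹ * ‖v‖ + Real.sqrt gam * ‖muh‖) := by
  set P₁ := Lp.posPart (gam • lam₁ - u₁)
  set P₂ := Lp.posPart (gam • lam₂ - u₂)
  have difference : b₂ u₁ lam₁ v muh - b₂ u₂ lam₂ v muh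
      = -⟪lam₁ - lam₂, v⟫ + ⟪muh, u₁ - u₂⟫ + ⟪muh, P₁ - P₂⟫ := by
    rw [hb₂, hb₂, inner_sub_left, inner_sub_right, inner_sub_right]
    ring
  have hP : ‖P₁ - P₂‖ ≤ Real.sqrt gam ^ 2 * ‖lam₁ - lam₂‖ + ‖u₁ - u₂‖ := by
    rw [Real.sq_sqrt hgam.le]
    exact Lp.norm_posPart_smul_sub_sub_posPart_smul_sub_le hgam.le u₁ u₂ lam₁ lam₂
  rw [difference]
  exact abs_neg_inner_add_inner_add_inner_le (Real.sqrt_pos.mpr hgam) _ _ _ _ _ hP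
end
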